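/- arXiv:1206.7101 — 2 statements merged into one kernel-verified Lean document; each statement's English description precedes it below -/
import Mathlib

section
/- Let a ∈ (0, 1/2), π, π' ∈ [a, 1-a], and ξ ∈ (0,1). Then the Kullback–Leibler divergence between Bernoulli(ξπ) and Bernoulli(ξπ') satisfies D(ξπ ‖ ξπ') ≥ ξ · ((π - π')² / (2π)) · (a/(1-a))². -/
/-!
With `φ = klFun`, `φ x = x log x + 1 - x`, the divergence splits as
`D(p ‖ q) = q φ(p/q) + (1 - q) φ((1-p)/(1-q))`, and the second term is nonnegative.
Comparing derivatives, using `log x ≤ x - 1` on `(0, 1]` and `log x ≥ 1 - 1/x` on `[1, ∞)`, gives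
`φ x ≥ (x - 1)² / (2 max 1 x)`, hence `D(p ‖ q) ≥ (p - q)² / (2 max p q)`. For `p = ξπ`, `q = ξπ'`
this is `ξ (π - π')² / (2 max π π')`, and `max π π' / π ≤ (1 - a) / a ≤ ((1 - a) / a)²`.
-/

/-- Kullback–Leibler divergence between Bernoulli distributions of parameters `p` and `q`. -/
noncomputable def bernoulliKL (p q : ℝ) : ℝ :=
  p * Real.log (p / q) + (1 - p) * Real.log ((1 - p) / (1 - q))

open Set InformationTheory

lemma bernoulliKL_eq_klFun (p : ℝ) {q : ℝ} (hq₀ : q ≠ 0) (hq₁ : q ≠ 1) :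
    bernoulliKL p q = q * klFun (p / q) + (1 - q) * klFun ((1 - p) / (1 - q)) := by
  have : 1 - q ≠ 0 := sub_ne_zero.mpr hq₁.symm
  simp only [bernoulliKL, klFun_apply]
  field_simp
  ring

lemma sq_sub_one_div_two_le_klFun {x : ℝ} (hx₀ : 0 ≤ x) (hx₁ : x ≤ 1) :
    (x - 1) ^ 2 / 2 ≤ klFun x := by
  let g : ℝ → ℝ := fun y ↦ klFun y - (y - 1) ^ 2 / 2
  have hg : ∀ y ≠ 0, HasDerivAt g (Real.log y - (y - 1)) y := fun y hy ↦
    ((hasDerivAt_klFun hy).sub (((hasDerivAt_id y).sub_const 1).pow 2 |>.div_const 2)).congr_deriv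
      (by simp)
  have : AntitoneOn g (Icc 0 1) := by
    refine antitoneOn_of_hasDerivWithinAt_nonpos (convex_Icc 0 1)
      ((continuous_klFun.sub (by fun_prop)).continuousOn)
      (fun y hy ↦ (hg y (by rw [interior_Icc] at hy; exact hy.1.ne')).hasDerivWithinAt) ?_
    intro y hy
    simp only [interior_Icc, mem_Ioo] at hy
    linarith [Real.log_le_sub_one_of_pos hy.1]
  have := this ⟨hx₀, hx₁⟩ ⟨zero_le_one, le_rfl⟩ hx₁
  simp only [g, klFun_one] at this
  linarith

lemma sq_sub_one_div_two_mul_le_klFun {x : ℝ} (hx : 1 ≤ x) :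
    (x - 1) ^ 2 / (2 * x) ≤ klFun x := by
  let g : ℝ → ℝ := fun y ↦ klFun y - (y - 2 + y⁻¹) / 2
  have hg : ∀ y ≠ 0, HasDerivAt g (Real.log y - (1 - (y ^ 2)⁻¹) / 2) y := fun y hy ↦
    ((hasDerivAt_klFun hy).sub
      (((hasDerivAt_id y).sub_const 2).add (hasDerivAt_inv hy) |>.div_const 2)).congr_deriv
      (by simp; ring)
  have : MonotoneOn g (Ici 1) := by
    refine monotoneOn_of_hasDerivWithinAt_nonneg (convex_Ici 1)
      (fun y hy ↦ (hg y (zero_lt_one.trans_le hy).ne').continuousAt.continuousWithinAt)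
      (fun y hy ↦ (hg y (zero_lt_one.trans_le (interior_subset hy)).ne').hasDerivWithinAt) ?_
    intro y hy
    simp only [interior_Ici, mem_Ioi] at hy
    have hlog := Real.one_sub_inv_le_log_of_pos (zero_lt_one.trans hy)
    have : (1 - (y ^ 2)⁻¹) / 2 ≤ 1 - y⁻¹ := by
      rw [← sub_nonneg]
      have : 1 - y⁻¹ - (1 - (y ^ 2)⁻¹) / 2 = (y - 1) ^ 2 / (2 * y ^ 2) := by
        field_simp; ring
      rw [this]; positivity
    linarith
  have := this (le_refl (1:ℝ)) hx hx
  have e : (x - 1) ^ 2 / (2 * x) = (x - 2 + x⁻¹) / 2 := by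
    field_simp; ring
  norm_num [g, klFun_one] at this
  linarith

lemma sq_sub_one_div_two_max_le_klFun {x : ℝ} (hx : 0 ≤ x) :
    (x - 1) ^ 2 / (2 * max 1 x) ≤ klFun x := by
  rcases le_total x 1 with h | h
  · simpa [max_eq_left h] using sq_sub_one_div_two_le_klFun hx h
  · simpa [max_eq_right h] using sq_sub_one_div_two_mul_le_klFun h

lemma sq_sub_div_two_max_le_bernoulliKL {p q : ℝ} (hp₀ : 0 ≤ p) (hp₁ : p ≤ 1) (hq₀ : 0 < q)
    (hq₁ : q < 1) : (p - q) ^ 2 / (2 * max p q) ≤ bernoulliKL p q := by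
  have hmax : max 1 (p / q) = max q p / q := by
    rw [← max_div_div_right hq₀.le, div_self hq₀.ne']
  have hfirst : (p - q) ^ 2 / (2 * max p q) = q * ((p / q - 1) ^ 2 / (2 * max 1 (p / q))) := by
    rw [hmax, max_comm]
    have : 0 < max p q := lt_max_of_lt_right hq₀
    field_simp
  have hsecond : 0 ≤ (1 - q) * klFun ((1 - p) / (1 - q)) :=
    mul_nonneg (by linarith) (klFun_nonneg (div_nonneg (by linarith) (by linarith)))
  rw [bernoulliKL_eq_klFun p hq₀.ne' hq₁.ne, hfirst]
  have := mul_le_mul_of_nonneg_left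
    (sq_sub_one_div_two_max_le_klFun (div_nonneg hp₀ hq₀.le)) hq₀.le
  linarith

theorem stmt_1 (a : ℝ) (ha : a ∈ Set.Ioo (0 : ℝ) (1/2))
    (π π' : ℝ) (hπ : π ∈ Set.Icc a (1 - a)) (hπ' : π' ∈ Set.Icc a (1 - a))
    (ξ : ℝ) (hξ : ξ ∈ Set.Ioo (0 : ℝ) 1) :
    ξ * ((π - π') ^ 2 / (2 * π)) * (a / (1 - a)) ^ 2 ≤ bernoulliKL (ξ * π) (ξ * π') := by
  obtain ⟨ha₀, ha₁⟩ := ha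
  obtain ⟨hπ₀, hπ₁⟩ := hπ
  obtain ⟨hπ'₀, hπ'₁⟩ := hπ'
  obtain ⟨hξ₀, hξ₁⟩ := hξ
  have hmax : max π π' * (a / (1 - a)) ^ 2 ≤ π :=
    calc max π π' * (a / (1 - a)) ^ 2 ≤ (1 - a) * (a / (1 - a)) ^ 2 := by
          gcongr; exact max_le hπ₁ hπ'₁
      _ = a * (a / (1 - a)) := by field_simp
      _ ≤ a * 1 := by gcongr; exact div_le_one_of_le₀ (by linarith) (by linarith)
      _ ≤ π := by linarith
  have hπmax : 0 < max π π' := lt_max_of_lt_left (by linarith)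
  calc ξ * ((π - π') ^ 2 / (2 * π)) * (a / (1 - a)) ^ 2
      = ξ * (π - π') ^ 2 / 2 * ((a / (1 - a)) ^ 2 / π) := by ring
    _ ≤ ξ * (π - π') ^ 2 / 2 * (1 / max π π') := by
      gcongr ξ * (π - π') ^ 2 / 2 * ?_
      rw [div_le_div_iff₀ (by linarith) hπmax]
      linarith
    _ = (ξ * π - ξ * π') ^ 2 / (2 * max (ξ * π) (ξ * π')) := by
      rw [← mul_max_of_nonneg _ _ hξ₀.le]
      field_simp
    _ ≤ bernoulliKL (ξ * π) (ξ * π') :=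
      sq_sub_div_two_max_le_bernoulliKL (by nlinarith) (by nlinarith) (by nlinarith) (by nlinarith)
end

section
/- Let a ∈ (0, 1/2), π, π', π'' ∈ [a, 1-a], and ξ ∈ (0,1). For Bernoulli densities f(x; p) = p^x (1-p)^{1-x} on {0,1}, one has |ξπ''·log(π/π') + (1 - ξπ'')·log((1-ξπ)/(1-ξπ'))| ≤ ξ·|π - π'| / a. -/
/-!
The left-hand side is `E(ξπ'', ξπ) - E(ξπ'', ξπ')`, where `E(p, q) = p log q + (1 - p) log (1 - q)`
is the expected log-likelihood of `Bernoulli q` under `Bernoulli p` (the factors `ξ` cancel in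
`log (ξπ / ξπ')`). On `q ∈ [ξa, ξ(1 - a)]` with `0 ≤ p ≤ ξ`, the derivative `p/q - (1-p)/(1-q)`
is a difference of two numbers in `[0, 1/a]`, so `E(p, ·)` is `1/a`-Lipschitz there.
-/

section

open Real Set

noncomputable def bernoulliExpectedLogLik (p q : ℝ) : ℝ := p * log q + (1 - p) * log (1 - q)

lemma bernoulliExpectedLogLik_sub (p : ℝ) {q q' : ℝ} (hq₀ : q ≠ 0) (hq₀' : q' ≠ 0)
    (hq₁ : 1 - q ≠ 0) (hq₁' : 1 - q' ≠ 0) :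
    bernoulliExpectedLogLik p q - bernoulliExpectedLogLik p q' =
      p * log (q / q') + (1 - p) * log ((1 - q) / (1 - q')) := by
  rw [log_div hq₀ hq₀', log_div hq₁ hq₁', bernoulliExpectedLogLik, bernoulliExpectedLogLik]
  ring

lemma hasDerivAt_bernoulliExpectedLogLik (p : ℝ) {q : ℝ} (hq₀ : q ≠ 0) (hq₁ : 1 - q ≠ 0) :
    HasDerivAt (bernoulliExpectedLogLik p) (p / q - (1 - p) / (1 - q)) q := by
  have hlog₁ : HasDerivAt (fun q => log (1 - q)) (-1 / (1 - q)) q := by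
    simpa [div_eq_mul_inv] using ((hasDerivAt_id q).const_sub 1).log hq₁
  rw [show p / q - (1 - p) / (1 - q) = p * q⁻¹ + (1 - p) * (-1 / (1 - q)) by ring]
  exact ((hasDerivAt_log hq₀).const_mul p).add (hlog₁.const_mul (1 - p))

lemma abs_deriv_bernoulliExpectedLogLik_le {a ξ p q : ℝ} (ha : 0 < a) (hξ₀ : 0 < ξ) (hξ₁ : ξ ≤ 1)
    (hp₀ : 0 ≤ p) (hpξ : p ≤ ξ) (hq : q ∈ Icc (ξ * a) (ξ * (1 - a))) :
    |p / q - (1 - p) / (1 - q)| ≤ a⁻¹ := by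
  obtain ⟨hqa, hqa'⟩ := hq
  have hq₀ : 0 < q := lt_of_lt_of_le (mul_pos hξ₀ ha) hqa
  have hq₁ : a ≤ 1 - q := by nlinarith
  apply abs_sub_le_of_nonneg_of_le (by positivity)
  · rw [div_le_iff₀ hq₀, ← div_eq_inv_mul, le_div_iff₀ ha]
    nlinarith
  · exact div_nonneg (by linarith) (by linarith)
  · rw [div_le_iff₀ (by linarith), ← div_eq_inv_mul, le_div_iff₀ ha]
    nlinarith

lemma abs_bernoulliExpectedLogLik_sub_le {a ξ p q q' : ℝ} (ha : 0 < a) (hξ₀ : 0 < ξ)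
    (hξ₁ : ξ ≤ 1) (hp₀ : 0 ≤ p) (hpξ : p ≤ ξ) (hq : q ∈ Icc (ξ * a) (ξ * (1 - a)))
    (hq' : q' ∈ Icc (ξ * a) (ξ * (1 - a))) :
    |bernoulliExpectedLogLik p q - bernoulliExpectedLogLik p q'| ≤ a⁻¹ * |q - q'| := by
  have hderiv : ∀ t ∈ Icc (ξ * a) (ξ * (1 - a)),
      HasDerivWithinAt (bernoulliExpectedLogLik p) (p / t - (1 - p) / (1 - t))
        (Icc (ξ * a) (ξ * (1 - a))) t := fun t ht =>
    (hasDerivAt_bernoulliExpectedLogLik p (by nlinarith [ht.1])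
      (by nlinarith [ht.2])).hasDerivWithinAt
  exact (convex_Icc _ _).norm_image_sub_le_of_norm_hasDerivWithin_le hderiv
    (fun t ht => abs_deriv_bernoulliExpectedLogLik_le ha hξ₀ hξ₁ hp₀ hpξ ht) hq' hq

end

theorem stmt_2 (a : ℝ) (ha : a ∈ Set.Ioo (0 : ℝ) (1/2))
    (π π' π'' : ℝ) (hπ : π ∈ Set.Icc a (1 - a)) (hπ' : π' ∈ Set.Icc a (1 - a))
    (hπ'' : π'' ∈ Set.Icc a (1 - a)) (ξ : ℝ) (hξ : ξ ∈ Set.Ioo (0 : ℝ) 1) :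
    |ξ * π'' * Real.log (π / π') + (1 - ξ * π'') * Real.log ((1 - ξ * π) / (1 - ξ * π'))|
      ≤ ξ * |π - π'| / a := by
  obtain ⟨ha₀, -⟩ := ha
  obtain ⟨hξ₀, hξ₁⟩ := hξ
  have hscale : ∀ t ∈ Set.Icc a (1 - a), ξ * t ∈ Set.Icc (ξ * a) (ξ * (1 - a)) := fun t ht =>
    ⟨mul_le_mul_of_nonneg_left ht.1 hξ₀.le, mul_le_mul_of_nonneg_left ht.2 hξ₀.le⟩
  have hpos : ∀ t ∈ Set.Icc a (1 - a), 0 < ξ * t ∧ 0 < 1 - ξ * t := fun t ht =>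
    ⟨by nlinarith [ht.1], by nlinarith [ht.2]⟩
  have hlhs : ξ * π'' * Real.log (π / π') + (1 - ξ * π'') * Real.log ((1 - ξ * π) / (1 - ξ * π')) =
      bernoulliExpectedLogLik (ξ * π'') (ξ * π) - bernoulliExpectedLogLik (ξ * π'') (ξ * π') := by
    obtain ⟨hq₀, hq₁⟩ := hpos π hπ
    obtain ⟨hq₀', hq₁'⟩ := hpos π' hπ'
    rw [bernoulliExpectedLogLik_sub _ hq₀.ne' hq₀'.ne' hq₁.ne' hq₁'.ne',
      mul_div_mul_left π π' hξ₀.ne']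
  have hp : 0 ≤ ξ * π'' ∧ ξ * π'' ≤ ξ :=
    ⟨by nlinarith [hπ''.1], by nlinarith [hπ''.2]⟩
  rw [hlhs]
  calc _ ≤ a⁻¹ * |ξ * π - ξ * π'| :=
      abs_bernoulliExpectedLogLik_sub_le ha₀ hξ₀ hξ₁.le hp.1 hp.2 (hscale π hπ) (hscale π' hπ')
    _ = ξ * |π - π'| / a := by
      rw [← mul_sub, abs_mul, abs_of_pos hξ₀]
      ring
end
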